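/- arXiv:1808.09880 — 6 statements merged into one kernel-verified Lean document; each statement's English description precedes it below -/
import Mathlib

section
/- Let f : X → Y be a continuous map between spectral spaces such that the preimage under f of every quasi-compact open subset of Y is quasi-compact. Assume that X is connected and nonempty and that Y is a noetherian topological space. If every point in the image of f is a closed point of Y, then f is constant, i.e., there exists y₀ ∈ Y with f(x) = y₀ for all x ∈ X. (First assertion of Lemma 4.1 of the paper.) -/
open TopologicalSpace

/-- Hofmann–Mislove-style lemma: in a quasi-sober space, a downward-directed family of
nonempty compact open sets has nonempty intersection. -/
lemma directed_compact_open_iInter_nonempty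
    {X : Type*} [TopologicalSpace X] [QuasiSober X] {ι : Type*} [Nonempty ι]
    (V : ι → Set X) (hdir : ∀ i j, ∃ k, V k ⊆ V i ∩ V j)
    (hopen : ∀ i, IsOpen (V i)) (hcpt : ∀ i, IsCompact (V i))
    (hne : ∀ i, (V i).Nonempty) : (⋂ i, V i).Nonempty := by
  set S : Set (Set X) := {Z | IsClosed Z ∧ ∀ i, (Z ∩ V i).Nonempty} with hS
  have hZorn : ∀ c ⊆ S, IsChain (· ⊆ ·) c → c.Nonempty →
      ∃ lb ∈ S, ∀ s ∈ c, lb ⊆ s := by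
    intro c hcS hchain hcne
    refine ⟨⋂₀ c, ⟨isClosed_sInter fun Z hZ => (hcS hZ).1, fun i => ?_⟩,
      fun s hs => Set.sInter_subset_of_mem hs⟩
    have : ((V i) ∩ ⋂₀ c).Nonempty := by
      rw [show ⋂₀ c = ⋂ Z : c, (Z : Set X) from Set.sInter_eq_iInter]
      refine (hcpt i).inter_iInter_nonempty _ (fun Z => (hcS Z.2).1) ?_
      intro u
      rcases hcne with ⟨Z₀, hZ₀⟩
      -- a finite subfamily of a chain has a least element
      have hleast : ∃ Z ∈ c, ∀ W : c, W ∈ u → Z ⊆ (W : Set X) := by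
        classical
        induction u using Finset.induction with
        | empty => exact ⟨Z₀, hZ₀, fun W hW => absurd hW (Finset.notMem_empty W)⟩
        | @insert W u hWu ih =>
          obtain ⟨Z, hZc, hZ⟩ := ih
          rcases hchain.total hZc W.2 with h | h
          · refine ⟨Z, hZc, fun W' hW' => ?_⟩
            rcases Finset.mem_insert.1 hW' with rfl | hW'
            · exact h
            · exact hZ W' hW'
          · refine ⟨(W : Set X), W.2, fun W' hW' => ?_⟩
            rcases Finset.mem_insert.1 hW' with rfl | hW'
            · exact le_refl _
            · exact h.trans (hZ W' hW')
      obtain ⟨Z, hZc, hZ⟩ := hleast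
      obtain ⟨x, hxZ, hxV⟩ := (hcS hZc).2 i
      exact ⟨x, hxV, Set.mem_iInter₂.2 fun W hW => hZ W hW hxZ⟩
    obtain ⟨x, hx1, hx2⟩ := this
    exact ⟨x, hx2, hx1⟩
  obtain ⟨m, -, hmS, hmin⟩ := zorn_superset_nonempty S hZorn Set.univ
    ⟨isClosed_univ, fun i => by simpa using hne i⟩
  -- the minimal element is irreducible
  have hm_ne : m.Nonempty := by
    obtain ⟨x, hx, -⟩ := hmS.2 (Classical.arbitrary ι)
    exact ⟨x, hx⟩
  have hirr : IsIrreducible m := by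
    refine ⟨hm_ne, ?_⟩
    rw [isPreirreducible_iff_isClosed_union_isClosed]
    intro z₁ z₂ hz₁ hz₂ hsub
    by_contra h
    push_neg at h
    obtain ⟨h₁, h₂⟩ := h
    have key : ∀ z : Set X, IsClosed z → ¬ m ⊆ z → ∃ i, (m ∩ z ∩ V i) = ∅ := by
      intro z hz hmz
      by_contra hc
      push_neg at hc
      have hmem : m ∩ z ∈ S :=
        ⟨hmS.1.inter hz, hc⟩
      exact hmz fun x hx => ((hmin hmem Set.inter_subset_left) hx).2
    obtain ⟨i, hi⟩ := key z₁ hz₁ h₁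
    obtain ⟨j, hj⟩ := key z₂ hz₂ h₂
    obtain ⟨k, hk⟩ := hdir i j
    obtain ⟨x, hxm, hxV⟩ := hmS.2 k
    rcases hsub hxm with hx1 | hx2
    · exact absurd hi (Set.nonempty_iff_ne_empty.1 ⟨x, ⟨hxm, hx1⟩, (hk hxV).1⟩)
    · exact absurd hj (Set.nonempty_iff_ne_empty.1 ⟨x, ⟨hxm, hx2⟩, (hk hxV).2⟩)
  obtain ⟨η, hη⟩ := QuasiSober.sober hirr hmS.1
  refine ⟨η, Set.mem_iInter.2 fun i => ?_⟩
  obtain ⟨x, hxm, hxV⟩ := hmS.2 i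
  have hxcl : x ∈ closure ({η} : Set X) := by rw [hη.def]; exact hxm
  obtain ⟨y, hyV, hy⟩ := mem_closure_iff.1 hxcl _ (hopen i) hxV
  rwa [show y = η from hy] at hyV

/-- **First assertion of Lemma 4.1.** Let `f : X → Y` be a quasi-compact continuous map
between spectral spaces, with `X` connected and nonempty and `Y` noetherian. If every point
in the image of `f` is a closed point of `Y`, then `f` is constant. -/
theorem constant_of_image_closed
    {X Y : Type*} [TopologicalSpace X] [TopologicalSpace Y]
    -- `X` is spectral:
    [CompactSpace X] [T0Space X] [QuasiSober X]
    (hXbasis : IsTopologicalBasis {U : Set X | IsOpen U ∧ IsCompact U})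
    (hXinter : ∀ U V : Set X, IsOpen U → IsCompact U → IsOpen V → IsCompact V →
      IsCompact (U ∩ V))
    -- `Y` is spectral:
    [CompactSpace Y] [T0Space Y] [QuasiSober Y]
    (hYbasis : IsTopologicalBasis {U : Set Y | IsOpen U ∧ IsCompact U})
    (hYinter : ∀ U V : Set Y, IsOpen U → IsCompact U → IsOpen V → IsCompact V →
      IsCompact (U ∩ V))
    -- `f` is a quasi-compact continuous map:
    (f : X → Y) (hf : IsSpectralMap f)
    -- `X` is connected and nonempty:
    [ConnectedSpace X]
    -- `Y` is noetherian:
    [NoetherianSpace Y]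
    -- every point in the image of `f` is a closed point of `Y`:
    (hclosed : ∀ x : X, IsClosed ({f x} : Set Y)) :
    ∃ y₀ : Y, ∀ x : X, f x = y₀ := by
  have hcont : Continuous f := hf.continuous
  -- Step 1: the range of `f` is closed in `Y`.
  have hrange_closed : IsClosed (Set.range f) := by
    refine isClosed_of_closure_subset ?_
    intro z hz
    -- directed family of preimages of quasi-compact open neighborhoods of `z`
    let ι := {U : Set Y // IsOpen U ∧ IsCompact U ∧ z ∈ U}
    have : Nonempty ι := ⟨⟨Set.univ, isOpen_univ, isCompact_univ, trivial⟩⟩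
    have key : (⋂ U : ι, f ⁻¹' (U : Set Y)).Nonempty := by
      refine directed_compact_open_iInter_nonempty _ ?_ ?_ ?_ ?_
      · rintro ⟨U₁, hU₁o, hU₁c, hzU₁⟩ ⟨U₂, hU₂o, hU₂c, hzU₂⟩
        exact ⟨⟨U₁ ∩ U₂, hU₁o.inter hU₂o, hYinter _ _ hU₁o hU₁c hU₂o hU₂c, hzU₁, hzU₂⟩,
          fun x hx => ⟨hx.1, hx.2⟩⟩
      · exact fun U => U.2.1.preimage hcont
      · exact fun U => hf.isCompact_preimage_of_isOpen U.2.1 U.2.2.1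
      · rintro ⟨U, hUo, hUc, hzU⟩
        obtain ⟨y, hyU, x, rfl⟩ := mem_closure_iff.1 hz U hUo hzU
        exact ⟨x, hyU⟩
    obtain ⟨x, hx⟩ := key
    have hfx : ∀ U : Set Y, IsOpen U → IsCompact U → z ∈ U → f x ∈ U := by
      intro U hUo hUc hzU
      exact Set.mem_iInter.1 hx ⟨U, hUo, hUc, hzU⟩
    have hzcl : z ∈ closure ({f x} : Set Y) := by
      rw [mem_closure_iff]
      intro W hW hzW
      obtain ⟨U, ⟨hUo, hUc⟩, hzU, hUW⟩ := hYbasis.exists_subset_of_mem_open hzW hW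
      exact ⟨f x, hUW (hfx U hUo hUc hzU), rfl⟩
    rw [(hclosed x).closure_eq] at hzcl
    exact hzcl ▸ Set.mem_range_self x
  -- Step 2: the range of `f` is finite.
  have hrange_fin : (Set.range f).Finite := by
    obtain ⟨S, hSfin, hScl, hSirr, hSU⟩ :=
      NoetherianSpace.exists_finite_set_isClosed_irreducible hrange_closed
    have hsub : ∀ t ∈ S, t ⊆ Set.range f := by
      intro t ht
      rw [hSU]
      exact Set.subset_sUnion_of_mem ht
    have hsingle : ∀ t ∈ S, ∃ y, t = {y} := by
      intro t ht
      obtain ⟨η, hη⟩ := QuasiSober.sober (hSirr t ht) (hScl t ht)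
      have hηt : η ∈ t := by rw [← hη.def]; exact subset_closure rfl
      obtain ⟨x, rfl⟩ := hsub t ht hηt
      refine ⟨f x, ?_⟩
      rw [← hη.def, (hclosed x).closure_eq]
    rw [hSU]
    refine Set.Finite.sUnion hSfin fun t ht => ?_
    obtain ⟨y, rfl⟩ := hsingle t ht
    exact Set.finite_singleton y
  -- Step 3: fibers are clopen; use connectedness.
  have hXne : Nonempty X := inferInstance
  obtain ⟨x₀⟩ := hXne
  refine ⟨f x₀, ?_⟩
  set A : Set X := f ⁻¹' {f x₀} with hA
  have hAclosed : IsClosed A := (hclosed x₀).preimage hcont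
  have hAopen : IsOpen A := by
    rw [← isClosed_compl_iff]
    have : Aᶜ = f ⁻¹' (⋃ y ∈ (Set.range f \ {f x₀} : Set Y), ({y} : Set Y)) := by
      ext x
      simp only [hA, Set.mem_compl_iff, Set.mem_preimage, Set.mem_singleton_iff,
        Set.mem_iUnion, Set.mem_diff, Set.mem_range]
      constructor
      · intro h
        exact ⟨f x, ⟨⟨x, rfl⟩, h⟩, rfl⟩
      · rintro ⟨y, ⟨-, hy⟩, rfl⟩
        exact hy
    rw [this]
    refine IsClosed.preimage hcont ?_
    refine Set.Finite.isClosed_biUnion hrange_fin.diff ?_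
    rintro y ⟨⟨x, rfl⟩, -⟩
    exact hclosed x
  have hAuniv : A = Set.univ :=
    IsClopen.eq_univ ⟨hAclosed, hAopen⟩ ⟨x₀, rfl⟩
  intro x
  have : x ∈ A := hAuniv ▸ Set.mem_univ x
  exact this
end

section
/- Let f : X → Y be a continuous map between spectral spaces such that the preimage under f of every quasi-compact open subset of Y is quasi-compact. Assume that X is connected and nonempty and that Y is a noetherian topological space. Let N be the set of points y in the image of f such that {y} is not closed in Y. If N is nonempty, then the image of f is contained in the topological closure of N. (Second assertion of Lemma 4.1 of the paper.) -/
open TopologicalSpace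

/-- In a quasi-sober space, a family of nonempty quasi-compact open sets which is
directed under inclusion has nonempty intersection. -/
lemma aux_sInter_nonempty {X : Type*} [TopologicalSpace X] [QuasiSober X]
    (𝒞 : Set (Set X)) (h𝒞ne : 𝒞.Nonempty)
    (hopen : ∀ C ∈ 𝒞, IsOpen C) (hcomp : ∀ C ∈ 𝒞, IsCompact C)
    (hne : ∀ C ∈ 𝒞, C.Nonempty)
    (hdir : ∀ C₁ ∈ 𝒞, ∀ C₂ ∈ 𝒞, ∃ C₃ ∈ 𝒞, C₃ ⊆ C₁ ∩ C₂) :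
    (⋂₀ 𝒞).Nonempty := by
  set S : Set (Set X) := {D | IsClosed D ∧ ∀ C ∈ 𝒞, (D ∩ C).Nonempty} with hS
  have hunivS : (Set.univ : Set X) ∈ S := by
    refine ⟨isClosed_univ, fun C hC => ?_⟩
    simpa using hne C hC
  obtain ⟨D, -, hDS, hDmin⟩ : ∃ D, D ⊆ Set.univ ∧ Minimal (· ∈ S) D := by
    refine zorn_superset_nonempty S ?_ _ hunivS
    intro c hcS hchain hcne
    refine ⟨⋂₀ c, ⟨isClosed_sInter fun D hD => (hcS hD).1, fun C hC => ?_⟩,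
      fun s hs => Set.sInter_subset_of_mem hs⟩
    have := hcne.to_subtype
    have key := IsCompact.inter_iInter_nonempty (hcomp C hC) (fun D : c => (D : Set X))
      (fun D => (hcS D.2).1) ?_
    · rwa [Set.sInter_eq_iInter, Set.inter_comm]
    · intro u
      rcases u.eq_empty_or_nonempty with rfl | hu
      · simpa using hne C hC
      · obtain ⟨m, hmu, hmmin⟩ := Finset.exists_minimal hu
        have hmle : ∀ x ∈ u, (m : Set X) ⊆ (x : Set X) := by
          intro x hxu
          rcases eq_or_ne x m with rfl | hxm
          · exact le_refl _
          · rcases hchain x.2 m.2 (fun h => hxm (Subtype.ext h)) with h | h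
            · by_contra hmx
              exact hmx (hmmin hxu h)
            · exact h
        obtain ⟨z, hzm, hzC⟩ := (hcS m.2).2 C hC
        exact ⟨z, hzC, Set.mem_iInter₂.2 fun x hx => hmle x hx hzm⟩
  -- D is irreducible
  have hDne : D.Nonempty := by
    obtain ⟨C, hC⟩ := h𝒞ne
    exact ((hDS.2 C hC).mono Set.inter_subset_left)
  have hpre : IsPreirreducible D := by
    intro u v hu hv hDu hDv
    by_contra hcon
    rw [Set.not_nonempty_iff_eq_empty] at hcon
    have key : ∀ w : Set X, IsOpen w → (D ∩ w).Nonempty → ∃ C ∈ 𝒞, D ∩ C ⊆ w := by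
      intro w hw hDw
      have hD1 : D \ w ∉ S := by
        intro hmem
        have := hDmin hmem Set.diff_subset
        obtain ⟨z, hz⟩ := hDw
        exact (this hz.1).2 hz.2
      rw [hS, Set.mem_setOf_eq, not_and] at hD1
      have := hD1 (hDS.1.sdiff hw)
      push_neg at this
      obtain ⟨C, hC, hCempty⟩ := this
      refine ⟨C, hC, fun z hz => ?_⟩
      by_contra hzw
      exact absurd hCempty (Set.nonempty_iff_ne_empty.1 ⟨z, ⟨hz.1, hzw⟩, hz.2⟩)
    obtain ⟨C₁, hC₁, hC₁sub⟩ := key u hu hDu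
    obtain ⟨C₂, hC₂, hC₂sub⟩ := key v hv hDv
    obtain ⟨C₃, hC₃, hC₃sub⟩ := hdir C₁ hC₁ C₂ hC₂
    obtain ⟨z, hzD, hzC₃⟩ := hDS.2 C₃ hC₃
    have hzu : z ∈ u := hC₁sub ⟨hzD, (hC₃sub hzC₃).1⟩
    have hzv : z ∈ v := hC₂sub ⟨hzD, (hC₃sub hzC₃).2⟩
    exact absurd hcon (Set.nonempty_iff_ne_empty.1 ⟨z, hzD, hzu, hzv⟩)
  have hirr : IsIrreducible D := ⟨hDne, hpre⟩
  -- generic point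
  have hgen := hirr.isGenericPoint_genericPoint hDS.1
  refine ⟨hirr.genericPoint, fun C hC => ?_⟩
  obtain ⟨z, hzD, hzC⟩ := hDS.2 C hC
  rw [← hgen] at hzD
  obtain ⟨w, hw, hwη⟩ := mem_closure_iff.1 hzD C (hopen C hC) hzC
  rwa [Set.mem_singleton_iff.1 hwη] at hw

/-- **Second assertion of Lemma 4.1.** Let `f : X → Y` be a quasi-compact continuous map
between spectral spaces, with `X` connected and nonempty and `Y` noetherian. Let `N` be the
set of non-closed points in the image of `f`. If `N` is nonempty, then the image of `f` is
contained in the closure of `N`. -/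
theorem image_subset_closure_of_nonclosed_points
    {X Y : Type*} [TopologicalSpace X] [TopologicalSpace Y]
    -- `X` is spectral:
    [CompactSpace X] [T0Space X] [QuasiSober X]
    (hXbasis : IsTopologicalBasis {U : Set X | IsOpen U ∧ IsCompact U})
    (hXinter : ∀ U V : Set X, IsOpen U → IsCompact U → IsOpen V → IsCompact V →
      IsCompact (U ∩ V))
    -- `Y` is spectral:
    [CompactSpace Y] [T0Space Y] [QuasiSober Y]
    (hYbasis : IsTopologicalBasis {U : Set Y | IsOpen U ∧ IsCompact U})
    (hYinter : ∀ U V : Set Y, IsOpen U → IsCompact U → IsOpen V → IsCompact V →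
      IsCompact (U ∩ V))
    -- `f` is a quasi-compact continuous map:
    (f : X → Y) (hf : IsSpectralMap f)
    -- `X` is connected and nonempty:
    [ConnectedSpace X]
    -- `Y` is noetherian:
    [NoetherianSpace Y]
    -- `N` is the set of non-closed points in the image of `f`:
    (N : Set Y) (hN : N = {y : Y | y ∈ Set.range f ∧ ¬ IsClosed ({y} : Set Y)})
    (hNne : N.Nonempty) :
    Set.range f ⊆ closure N := by
  by_contra hcon
  rw [Set.not_subset] at hcon
  obtain ⟨y₀, ⟨x₀, rfl⟩, hy₀⟩ := hcon
  set U : Set Y := (closure N)ᶜ with hU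
  have hUopen : IsOpen U := isClosed_closure.isOpen_compl
  -- The key claim: f ⁻¹' U is closed.
  have hclosed : IsClosed (f ⁻¹' U) := by
    rw [← closure_subset_iff_isClosed]
    intro x hx
    set ξ := f x with hξdef
    have hξ : ξ ∈ closure (f '' (f ⁻¹' U)) := by
      have := image_closure_subset_closure_image (s := f ⁻¹' U) hf.continuous
      exact this ⟨x, hx, rfl⟩
    set 𝒞 : Set (Set X) := {A | ∃ V : Set Y, IsOpen V ∧ ξ ∈ V ∧ A = f ⁻¹' (U ∩ V)} with h𝒞
    have h𝒞ne : 𝒞.Nonempty := ⟨f ⁻¹' (U ∩ Set.univ), Set.univ, isOpen_univ, trivial, rfl⟩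
    have hint : (⋂₀ 𝒞).Nonempty := by
      refine aux_sInter_nonempty 𝒞 h𝒞ne ?_ ?_ ?_ ?_
      · rintro C ⟨V, hV, hξV, rfl⟩
        exact (hUopen.inter hV).preimage hf.continuous
      · rintro C ⟨V, hV, hξV, rfl⟩
        exact hf.isCompact_preimage_of_isOpen (hUopen.inter hV)
          (NoetherianSpace.isCompact _)
      · rintro C ⟨V, hV, hξV, rfl⟩
        obtain ⟨z, hz, x', hx'U, hx'z⟩ := mem_closure_iff.1 hξ V hV hξV
        exact ⟨x', hx'U, hx'z ▸ hz⟩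
      · rintro C₁ ⟨V₁, hV₁, hξV₁, rfl⟩ C₂ ⟨V₂, hV₂, hξV₂, rfl⟩
        refine ⟨f ⁻¹' (U ∩ (V₁ ∩ V₂)), ⟨V₁ ∩ V₂, hV₁.inter hV₂, ⟨hξV₁, hξV₂⟩, rfl⟩, ?_⟩
        intro z hz
        exact ⟨⟨hz.1, hz.2.1⟩, hz.1, hz.2.2⟩
    obtain ⟨x', hx'⟩ := hint
    set y := f x' with hy
    have hyall : ∀ V : Set Y, IsOpen V → ξ ∈ V → y ∈ U ∩ V := by
      intro V hV hξV
      exact hx' _ ⟨V, hV, hξV, rfl⟩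
    have hyU : y ∈ U := (hyall Set.univ isOpen_univ trivial).1
    have hyclosed : IsClosed ({y} : Set Y) := by
      by_contra hc
      have : y ∈ N := hN ▸ ⟨⟨x', rfl⟩, hc⟩
      exact hyU (subset_closure this)
    have hξy : ξ ∈ closure ({y} : Set Y) := by
      rw [mem_closure_iff]
      intro o ho hξo
      exact ⟨y, (hyall o ho hξo).2, rfl⟩
    rw [hyclosed.closure_eq, Set.mem_singleton_iff] at hξy
    show ξ ∈ U
    rw [hξy]
    exact hyU
  -- Now the clopen decomposition contradicts connectedness.
  have hclopen : IsClopen (f ⁻¹' (closure N)) := by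
    constructor
    · exact isClosed_closure.preimage hf.continuous
    · have : f ⁻¹' (closure N) = (f ⁻¹' U)ᶜ := by
        rw [hU, Set.preimage_compl, compl_compl]
      rw [this]
      exact hclosed.isOpen_compl
  rcases isClopen_iff.1 hclopen with h | h
  · obtain ⟨y₁, hy₁⟩ := hNne
    obtain ⟨x₁, hx₁⟩ := (hN ▸ hy₁ : y₁ ∈ {y : Y | y ∈ Set.range f ∧ ¬ IsClosed ({y} : Set Y)}).1
    have : x₁ ∈ f ⁻¹' (closure N) := by
      simp only [Set.mem_preimage, hx₁]
      exact subset_closure hy₁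
    rw [h] at this
    exact this
  · have : x₀ ∈ f ⁻¹' (closure N) := h ▸ Set.mem_univ x₀
    exact hy₀ this
end

section
/- Let p be a prime number, let R be a commutative ring of characteristic p, and let n ≥ 0 be a natural number. Consider the inverse limit along p-th power maps lim_{x ↦ x^p} R = { (a_m)_{m ∈ ℕ} : a_m ∈ R, a_{m+1}^p = a_m for all m } and similarly lim_{x ↦ x^p} R[X₁,…,Xₙ] for the multivariate polynomial ring R[X₁,…,Xₙ]. Then the map induced componentwise by the constant-polynomial inclusion C : R → R[X₁,…,Xₙ] is a bijection from lim_{x ↦ x^p} R onto lim_{x ↦ x^p} R[X₁,…,Xₙ]. In particular, every member of a compatible system of p-th power roots in R[X₁,…,Xₙ] is a constant polynomial. (This is the isomorphism lim_{x↦x^p}(O_K/p)[T₁,…,Tₙ] ≅ lim_{x↦x^p} O_K/p used in the proof of Proposition 2.12 of the paper, stated for an arbitrary base ring of characteristic p.) -/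
open MvPolynomial

lemma support_pow_char_pow_subset {p : ℕ} [Fact p.Prime] {σ R : Type*} [CommRing R]
    [CharP R p] (f : MvPolynomial σ R) (k : ℕ) (d : σ →₀ ℕ)
    (hd : d ∈ (f ^ p ^ k).support) : ∃ e ∈ f.support, d = p ^ k • e := by
  classical
  rw [f.as_sum, sum_pow_char_pow] at hd
  simp only [monomial_pow] at hd
  have := MvPolynomial.support_sum hd
  simp only [Finset.mem_biUnion] at this
  obtain ⟨e, he, hde⟩ := this
  refine ⟨e, he, ?_⟩
  classical
  rw [support_monomial] at hde
  split_ifs at hde with h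
  · simp at hde
  · simpa using hde

/-- For a commutative ring `R` of characteristic `p` and the polynomial ring `R[X₁,…,Xₙ]`,
the constant-polynomial inclusion `C : R → R[X₁,…,Xₙ]` induces a bijection
`lim_{x ↦ x^p} R ≃ lim_{x ↦ x^p} R[X₁,…,Xₙ]` between the inverse limits along the `p`-th
power maps. (The isomorphism used in the proof of Proposition 2.12.) -/
theorem bijective_inverseLimit_frobenius_C
    (p : ℕ) (hp : p.Prime) (R : Type*) [CommRing R] [CharP R p] (n : ℕ) :
    Function.Bijective
      (fun a : {a : ℕ → R // ∀ m, a (m + 1) ^ p = a m} =>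
        (⟨fun m => MvPolynomial.C (a.1 m), fun m => by
            rw [← map_pow, a.2 m]⟩ :
          {b : ℕ → MvPolynomial (Fin n) R // ∀ m, b (m + 1) ^ p = b m})) := by
  have : Fact p.Prime := ⟨hp⟩
  constructor
  · intro a b hab
    ext m
    exact MvPolynomial.C_injective (Fin n) R (congrFun (congrArg Subtype.val hab) m)
  · rintro ⟨b, hb⟩
    -- each b m is constant
    have key : ∀ m, b m = C (coeff 0 (b m)) := by
      intro m
      have hroot : ∀ k, b m = (b (m + k)) ^ p ^ k := by
        intro k
        induction k with
        | zero => simp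
        | succ k ih =>
          rw [ih, ← hb (m + k), ← pow_mul, pow_succ, Nat.add_assoc]
          ring_nf
      ext d
      rcases eq_or_ne d 0 with rfl | hd
      · simp
      · rw [coeff_C, if_neg (Ne.symm hd)]
        by_contra hne
        have hdsupp : d ∈ (b m).support := by
          rwa [MvPolynomial.mem_support_iff]
        obtain ⟨i, hi⟩ := Finsupp.ne_iff.mp hd
        simp only [Finsupp.coe_zero, Pi.zero_apply] at hi
        have hk : d i < p ^ d i := Nat.lt_pow_self (n := d i) hp.one_lt
        rw [hroot (d i)] at hdsupp
        obtain ⟨e, _, hde⟩ := support_pow_char_pow_subset (b (m + d i)) (d i) d hdsupp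
        have hdi : d i = p ^ d i * e i := by
          have h' := DFunLike.congr_fun hde i
          simpa using h'
        rcases Nat.eq_zero_or_pos (e i) with h0 | h1
        · rw [h0, Nat.mul_zero] at hdi; exact hi hdi
        · exact absurd hk (not_lt.mpr (le_trans (Nat.le_mul_of_pos_right _ h1)
            (le_of_eq hdi.symm)))
    refine ⟨⟨fun m => coeff 0 (b m), fun m => ?_⟩, ?_⟩
    · have := hb m
      rw [key (m + 1), key m, ← map_pow] at this
      exact MvPolynomial.C_injective (Fin n) R this
    · exact Subtype.ext (funext fun m => (key m).symm)
end

section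
/- Let p be a prime number, let R be a commutative ring of characteristic p, and let n ≥ 0 be a natural number. If f ∈ R[X₁,…,Xₙ] is a polynomial such that for every m ∈ ℕ there exists g ∈ R[X₁,…,Xₙ] with g^(p^m) = f, then f is a constant polynomial, i.e., there exists r ∈ R with f = C r. (This is the claim from the proof of Proposition 2.12 of the paper that a polynomial ring over a ring of characteristic p contains no non-constant element admitting p-power roots of all orders.) -/
open MvPolynomial

lemma pow_char_support_aux (p : ℕ) (hp : p.Prime) (R : Type*) [CommRing R] [CharP R p] (n : ℕ)
    (g : MvPolynomial (Fin n) R) {s : Fin n →₀ ℕ} (hs : s ∈ (g ^ p).support) :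
    ∃ t : Fin n →₀ ℕ, s = p • t := by
  haveI := Fact.mk hp
  have hsum : g ^ p = ∑ t ∈ g.support, monomial (p • t) (coeff t g ^ p) := by
    conv_lhs => rw [g.as_sum]
    rw [sum_pow_char]
    simp [monomial_pow]
  rw [hsum] at hs
  have := Finset.mem_biUnion.mp (MvPolynomial.support_sum hs)
  obtain ⟨t, _, hmem⟩ := this
  have := MvPolynomial.support_monomial_subset hmem
  simp only [Finset.mem_singleton] at this
  exact ⟨t, this⟩

lemma pow_char_pow_dvd (p : ℕ) (hp : p.Prime) (R : Type*) [CommRing R] [CharP R p] (n : ℕ) :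
    ∀ (m : ℕ) (g : MvPolynomial (Fin n) R) (s : Fin n →₀ ℕ),
      s ∈ (g ^ p ^ m).support → ∀ i, p ^ m ∣ s i := by
  intro m
  induction m with
  | zero => intro g s _ i; simp
  | succ m ih =>
    intro g s hs i
    rw [pow_succ, pow_mul] at hs
    obtain ⟨t, rfl⟩ := pow_char_support_aux p hp R n (g ^ p ^ m) hs
    have ht : t ∈ (g ^ p ^ m).support := by
      by_contra h
      simp only [MvPolynomial.mem_support_iff] at hs h
      apply hs
      have hsum : (g ^ p ^ m) ^ p
          = ∑ u ∈ (g ^ p ^ m).support, monomial (p • u) (coeff u (g ^ p ^ m) ^ p) := by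
        conv_lhs => rw [(g ^ p ^ m).as_sum]
        haveI := Fact.mk hp
        rw [sum_pow_char]
        simp [monomial_pow]
      rw [hsum, MvPolynomial.coeff_sum]
      apply Finset.sum_eq_zero
      intro u hu
      rw [MvPolynomial.coeff_monomial]
      split_ifs with h'
      · exfalso
        have : u = t := by
          ext j
          have := DFunLike.congr_fun h' j
          simp only [Finsupp.smul_apply, smul_eq_mul] at this
          exact (Nat.eq_of_mul_eq_mul_left hp.pos this.symm).symm
        rw [this] at hu
        exact h (MvPolynomial.mem_support_iff.mp hu)
      · rfl
    have := ih g t ht i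
    rw [pow_succ']
    simpa [mul_comm] using mul_dvd_mul_left p this

/-- A polynomial ring over a commutative ring of characteristic `p` contains no non-constant
element admitting `p`-power roots of all orders: if `f ∈ R[X₁,…,Xₙ]` has, for every `m`, a
`p^m`-th root in `R[X₁,…,Xₙ]`, then `f` is a constant polynomial. (Claim from the proof of
Proposition 2.12.) -/
theorem isConstant_of_pPowRoots
    (p : ℕ) (hp : p.Prime) (R : Type*) [CommRing R] [CharP R p] (n : ℕ)
    (f : MvPolynomial (Fin n) R)
    (h : ∀ m : ℕ, ∃ g : MvPolynomial (Fin n) R, g ^ p ^ m = f) :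
    ∃ r : R, f = MvPolynomial.C r := by
  refine ⟨coeff 0 f, ?_⟩
  ext s
  rw [MvPolynomial.coeff_C]
  by_cases hs : s = 0
  · simp [hs]
  · rw [if_neg (fun h' => hs h'.symm)]
    by_contra hc
    have hmem : s ∈ f.support := MvPolynomial.mem_support_iff.mpr hc
    obtain ⟨i, hi⟩ : ∃ i, s i ≠ 0 := by
      by_contra hall
      push_neg at hall
      exact hs (Finsupp.ext hall)
    obtain ⟨m, hm⟩ := pow_unbounded_of_one_lt (s i) hp.one_lt
    obtain ⟨g, hg⟩ := h m
    have hdvd := pow_char_pow_dvd p hp R n m g s (by rwa [hg]) i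
    exact absurd (Nat.le_of_dvd (Nat.pos_of_ne_zero hi) hdvd) (not_le.mpr hm)
end

section
/- Let p be a prime number and let A be a commutative ring that is complete and separated for the p-adic topology, i.e., A is adically complete with respect to the ideal (p) generated by the image of p in A. Then the reduction map A → A/(p) induces a bijection from the set { (a_m)_{m ∈ ℕ} : a_m ∈ A, a_{m+1}^p = a_m for all m } onto the set { (b_m)_{m ∈ ℕ} : b_m ∈ A/(p), b_{m+1}^p = b_m for all m }. (This is the isomorphism of multiplicative monoids lim_{x↦x^p} A ≅ lim_{x↦x^p} A/p invoked in the proof of Proposition 2.12 of the paper.) -/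
private lemma smodeq_iff_p {A : Type*} [CommRing A] (p : ℕ) (n : ℕ) (x y : A) :
    x ≡ y [SMOD (Ideal.span {(p : A)} ^ n • ⊤ : Ideal A)] ↔ (p : A) ^ n ∣ x - y := by
  rw [smul_eq_mul, Ideal.mul_top, SModEq.sub_mem, Ideal.span_singleton_pow,
    Ideal.mem_span_singleton]

private lemma dvd_pow_sub_pow_step {A : Type*} [CommRing A] (p n : ℕ) (hp : p.Prime)
    (x y : A) (hn : 1 ≤ n) (h : (p : A) ^ n ∣ x - y) :
    (p : A) ^ (n + 1) ∣ x ^ p - y ^ p := by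
  obtain ⟨t, ht⟩ := h
  have hx : x = y + (p : A) ^ n * t := by linear_combination ht
  subst hx
  rw [add_pow, Finset.sum_range_succ]
  simp only [Nat.sub_self, pow_zero, Nat.choose_self, Nat.cast_one, mul_one, one_mul]
  rw [add_sub_cancel_right]
  refine Finset.dvd_sum fun k hk => ?_
  have hk' : k < p := Finset.mem_range.mp hk
  rcases eq_or_lt_of_le (Nat.lt_iff_add_one_le.mp hk') with heq | hlt
  · -- k = p - 1
    have hpk : p - k = 1 := by omega
    have hchoose : p.choose k = p := by
      have hk1 : k = p - 1 := by omega
      rw [hk1, Nat.choose_symm hp.one_le, Nat.choose_one_right]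
    rw [hpk, hchoose, pow_one, pow_succ]
    exact mul_dvd_mul ⟨y ^ k * t, by ring⟩ dvd_rfl
  · -- p - k ≥ 2
    have h2 : 2 ≤ p - k := by omega
    have hd : (p : A) ^ (n + 1) ∣ ((p : A) ^ n * t) ^ (p - k) := by
      rw [mul_pow, ← pow_mul]
      exact Dvd.dvd.mul_right (pow_dvd_pow _ (by nlinarith)) _
    exact (hd.mul_left _).mul_right _

private lemma dvd_pow_p_pow {A : Type*} [CommRing A] (p : ℕ) (hp : p.Prime) (x y : A)
    (k : ℕ) (h : (p : A) ∣ x - y) : (p : A) ^ (k + 1) ∣ x ^ p ^ k - y ^ p ^ k := by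
  induction k with
  | zero => simpa using h
  | succ k ih =>
    have := dvd_pow_sub_pow_step p (k + 1) hp (x ^ p ^ k) (y ^ p ^ k) (by omega) ih
    rwa [← pow_mul, ← pow_mul, ← pow_succ] at this

/-- For a prime `p` and a commutative ring `A` complete and separated for the `p`-adic
topology, the reduction map `A → A/(p)` induces a bijection
`lim_{x ↦ x^p} A ≃ lim_{x ↦ x^p} A/(p)` between the inverse limits along the `p`-th power
maps. (The isomorphism invoked in the proof of Proposition 2.12.) -/
theorem bijective_inverseLimit_frobenius_quotient
    (p : ℕ) (hp : p.Prime) (A : Type*) [CommRing A]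
    [IsAdicComplete (Ideal.span {(p : A)}) A] :
    Function.Bijective
      (fun a : {a : ℕ → A // ∀ m, a (m + 1) ^ p = a m} =>
        (⟨fun m => Ideal.Quotient.mk (Ideal.span {(p : A)}) (a.1 m), fun m => by
            rw [← map_pow, a.2 m]⟩ :
          {b : ℕ → A ⧸ Ideal.span {(p : A)} // ∀ m, b (m + 1) ^ p = b m})) := by
  constructor
  · -- injectivity
    intro a a' h
    have h' : ∀ m, (p : A) ∣ a.1 m - a'.1 m := by
      intro m
      have h0 := congrFun (congrArg Subtype.val h) m
      simp only at h0
      rwa [Ideal.Quotient.eq, Ideal.mem_span_singleton] at h0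
    have hiter : ∀ (a : {a : ℕ → A // ∀ m, a (m + 1) ^ p = a m}) (m k : ℕ),
        a.1 (m + k) ^ p ^ k = a.1 m := by
      intro a m k
      induction k with
      | zero => simp
      | succ k ih =>
        rw [pow_succ', pow_mul, ← Nat.add_assoc, a.2 (m + k), ih]
    ext m
    refine sub_eq_zero.mp (IsHausdorff.haus
      (IsAdicComplete.toIsHausdorff (I := Ideal.span {(p : A)})) (a.1 m - a'.1 m)
      (fun n => (smodeq_iff_p p n _ 0).mpr ?_))
    rw [sub_zero]
    have hd := dvd_pow_p_pow p hp (a.1 (m + n)) (a'.1 (m + n)) n (h' (m + n))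
    rw [hiter a m n, hiter a' m n] at hd
    exact dvd_trans (pow_dvd_pow _ (Nat.le_succ n)) hd
  · -- surjectivity
    intro b
    have hc : ∀ m, ∃ c : A, Ideal.Quotient.mk (Ideal.span {(p : A)}) c = b.1 m := fun m =>
      Ideal.Quotient.mk_surjective (b.1 m)
    choose c hcspec using hc
    have key : ∀ m, (p : A) ∣ c (m + 1) ^ p - c m := by
      intro m
      have h0 : Ideal.Quotient.mk (Ideal.span {(p : A)}) (c (m + 1) ^ p)
          = Ideal.Quotient.mk (Ideal.span {(p : A)}) (c m) := by
        rw [map_pow, hcspec, hcspec, b.2 m]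
      rwa [Ideal.Quotient.eq, Ideal.mem_span_singleton] at h0
    set f : ℕ → ℕ → A := fun m k => c (m + k) ^ p ^ k with hf
    have hstep : ∀ m k, (p : A) ^ (k + 1) ∣ f m (k + 1) - f m k := by
      intro m k
      have hd := dvd_pow_p_pow p hp (c (m + k + 1) ^ p) (c (m + k)) k (key (m + k))
      rw [← pow_mul, ← pow_succ'] at hd
      simpa [hf, show m + k + 1 = m + (k + 1) by omega] using hd
    have hchain : ∀ m j k, j ≤ k → (p : A) ^ j ∣ f m k - f m j := by
      intro m j k hjk
      induction k, hjk using Nat.le_induction with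
      | base => simp
      | succ k hjk ih =>
        have h1 : (p : A) ^ j ∣ f m (k + 1) - f m k :=
          dvd_trans (pow_dvd_pow _ (by omega)) (hstep m k)
        have h2 := dvd_add h1 ih
        rwa [sub_add_sub_cancel] at h2
    have hex : ∀ m, ∃ L : A, ∀ k, (p : A) ^ k ∣ f m k - L := by
      intro m
      obtain ⟨L, hL⟩ := IsPrecomplete.prec
        (IsAdicComplete.toIsPrecomplete (I := Ideal.span {(p : A)}))
        (f := f m) (fun {j k} hjk => ((smodeq_iff_p p j _ _).mpr (hchain m j k hjk)).symm)
      exact ⟨L, fun k => (smodeq_iff_p p k _ _).mp (hL k)⟩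
    choose a ha using hex
    have ha2 : ∀ m, a (m + 1) ^ p = a m := by
      intro m
      have key2 : ∀ k : ℕ, (p : A) ^ k ∣ a (m + 1) ^ p - a m := by
        intro k
        have h0 : (p : A) ^ k ∣ a (m + 1) - f (m + 1) k := by
          have := ha (m + 1) k
          rwa [← dvd_neg, neg_sub] at this
        have h1 : (p : A) ^ k ∣ a (m + 1) ^ p - f (m + 1) k ^ p :=
          h0.trans (sub_dvd_pow_sub_pow _ _ p)
        have h2 : f (m + 1) k ^ p = f m (k + 1) := by
          simp only [hf]
          rw [← pow_mul, ← pow_succ, show m + 1 + k = m + (k + 1) by omega]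
        have h3 : (p : A) ^ k ∣ f m (k + 1) - a m :=
          dvd_trans (pow_dvd_pow _ (Nat.le_succ k)) (ha m (k + 1))
        have h4 := dvd_add h1 (h2 ▸ h3)
        rwa [sub_add_sub_cancel] at h4
      refine sub_eq_zero.mp (IsHausdorff.haus
        (IsAdicComplete.toIsHausdorff (I := Ideal.span {(p : A)})) (a (m + 1) ^ p - a m)
        (fun n => (smodeq_iff_p p n _ 0).mpr (by rw [sub_zero]; exact key2 n)))
    refine ⟨⟨a, ha2⟩, Subtype.ext (funext fun m => ?_)⟩
    have h4 : (p : A) ∣ f m 1 - a m := by simpa using ha m 1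
    have h5 : (p : A) ∣ f m 1 - c m := by simpa [hf] using key m
    have h6 := dvd_sub h5 h4
    rw [sub_sub_sub_cancel_left] at h6
    show Ideal.Quotient.mk (Ideal.span {(p : A)}) (a m) = b.1 m
    rw [← hcspec m, Ideal.Quotient.eq, Ideal.mem_span_singleton]
    exact h6
end

section
/- Let A be a commutative ring, let t ∈ A, and let S ⊆ A be a subset such that every x ∈ A can be written as x = s + t·x' with s ∈ S and x' ∈ A. Let L be a complete nonarchimedean normed commutative ring, and let φ : A → L be a ring homomorphism such that ‖φ(a)‖ ≤ 1 for all a ∈ A and ‖φ(t)‖ < 1. Let C be a closed subring of L with φ(t) ∈ C and φ(s) ∈ C for all s ∈ S. Then φ(x) ∈ C for every x ∈ A. (This is the approximation argument concluding the proof of Proposition 2.12 of the paper: iterating the decomposition produces partial sums Σ_{i≤n} φ(t)^i φ(s_i) in C converging to φ(x).) -/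
/-- The approximation argument concluding the proof of Proposition 2.12. Let `A` be a
commutative ring, `t ∈ A`, and `S ⊆ A` a subset such that every `x ∈ A` can be written as
`x = s + t * x'` with `s ∈ S`. Let `L` be a complete nonarchimedean normed commutative ring
and `φ : A → L` a ring homomorphism with `‖φ a‖ ≤ 1` for all `a` and `‖φ t‖ < 1`. If `C` is a
closed subring of `L` containing `φ t` and `φ s` for all `s ∈ S`, then `φ x ∈ C` for
every `x ∈ A`. -/
theorem mem_closedSubring_of_decomposition
    (A : Type*) [CommRing A]
    (L : Type*) [NormedCommRing L] [IsUltrametricDist L] [CompleteSpace L]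
    (t : A) (S : Set A)
    (hdec : ∀ x : A, ∃ s ∈ S, ∃ x' : A, x = s + t * x')
    (φ : A →+* L) (hbound : ∀ a : A, ‖φ a‖ ≤ 1) (ht : ‖φ t‖ < 1)
    (C : Subring L) (hC : IsClosed (C : Set L))
    (htC : φ t ∈ C) (hSC : ∀ s ∈ S, φ s ∈ C) :
    ∀ x : A, φ x ∈ C := by
  -- choice functions
  choose s hsS f hf using hdec
  intro x
  set p : ℕ → L := fun n => ∑ i ∈ Finset.range n, φ t ^ i * φ (s (f^[i] x)) with hp
  have key : ∀ n, φ x = p n + φ t ^ n * φ (f^[n] x) := by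
    intro n
    induction n with
    | zero => simp [hp]
    | succ n ih =>
      rw [ih]
      show _ = (∑ i ∈ Finset.range (n+1), φ t ^ i * φ (s (f^[i] x))) + _
      rw [Finset.sum_range_succ]
      have : φ (f^[n] x) = φ (s (f^[n] x)) + φ t * φ (f^[n+1] x) := by
        conv_lhs => rw [show f^[n] x = s (f^[n] x) + t * f (f^[n] x) from hf (f^[n] x)]
        rw [map_add, map_mul, Function.iterate_succ_apply']
      rw [this]
      ring
  have hpC : ∀ n, p n ∈ C := by
    intro n
    refine Subring.sum_mem _ fun i _ => Subring.mul_mem _ (Subring.pow_mem _ htC _)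
      (hSC _ (hsS _))
  have htnn : (0:ℝ) ≤ ‖φ t‖ := norm_nonneg _
  have hlim : Filter.Tendsto p Filter.atTop (nhds (φ x)) := by
    have : Filter.Tendsto (fun n => ‖φ t‖ ^ n) Filter.atTop (nhds 0) :=
      tendsto_pow_atTop_nhds_zero_of_lt_one htnn ht
    rw [tendsto_iff_dist_tendsto_zero]
    refine squeeze_zero (fun n => dist_nonneg) (fun n => ?_) this
    rw [dist_eq_norm]
    calc ‖p n - φ x‖ = ‖φ t ^ n * φ (f^[n] x)‖ := by
          rw [key n]; rw [show p n - (p n + φ t ^ n * φ (f^[n] x)) = -(φ t ^ n * φ (f^[n] x)) by ring, norm_neg]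
      _ ≤ ‖φ t ^ n‖ * ‖φ (f^[n] x)‖ := norm_mul_le _ _
      _ ≤ ‖φ t‖ ^ n * 1 := by
          have hpow : ‖φ t ^ n‖ ≤ ‖φ t‖ ^ n := by
            cases n with
            | zero => simpa using hbound 1
            | succ n => exact norm_pow_le' _ n.succ_pos
          exact mul_le_mul hpow (hbound _) (norm_nonneg _) (by positivity)
      _ = ‖φ t‖ ^ n := mul_one _
  exact hC.mem_of_tendsto hlim (Filter.Eventually.of_forall hpC)
end
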